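/- Let (C,α,x) be an elusive triple in H(m,q) where the code C has minimum distance δ ≥ 3, and let π be a (C,α,x)-associate. Then there are exactly 2q−4 (C,α,x)-associates π' with d(π,π') = 3. -/

import Mathlib

variable {M Q : Type*}

/-- The set of entries in which two vertices of the Hamming graph differ. -/
def diffSet [Fintype M] [DecidableEq Q] (α β : M → Q) : Finset M :=
  Finset.univ.filter fun i => α i ≠ β i

/-- `GammaSet α r` is the set of vertices at Hamming distance exactly `r` from `α`. -/
def GammaSet [Fintype M] [DecidableEq Q] (α : M → Q) (r : ℕ) : Set (M → Q) :=
  {β | hammingDist α β = r}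

/-- The neighbour set `C₁` of a code `C`. -/
def neighbourSet [Fintype M] [DecidableEq Q] (C : Set (M → Q)) : Set (M → Q) :=
  {ν | ν ∉ C ∧ ∃ c ∈ C, hammingDist ν c = 1}

/-- An automorphism of the Hamming graph: a bijection of vertices preserving Hamming distance. -/
def IsAut [Fintype M] [DecidableEq Q] (x : (M → Q) ≃ (M → Q)) : Prop :=
  ∀ a b, hammingDist (x a) (x b) = hammingDist a b

/-- An elusive triple `(C, α, x)`. -/
def IsElusiveTriple [Fintype M] [DecidableEq Q] (C : Set (M → Q)) (α : M → Q)
    (x : (M → Q) ≃ (M → Q)) : Prop :=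
  IsAut x ∧ x '' neighbourSet C = neighbourSet C ∧ α ∈ C ∧ x α ∉ C

/-- A `(C,α,x)`-associate: a vertex in `Γ₂(α) ∩ C^x`. -/
def IsAssociate [Fintype M] [DecidableEq Q] (C : Set (M → Q)) (α : M → Q)
    (x : (M → Q) ≃ (M → Q)) (π : M → Q) : Prop :=
  π ∈ GammaSet α 2 ∧ π ∈ x '' C

/-- `MC C π π' = |C ∩ Γ₂(π) ∩ Γ₂(π')|`, the number of mutual codewords. -/
noncomputable def MC [Fintype M] [DecidableEq Q] (C : Set (M → Q)) (π π' : M → Q) : ℕ :=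
  (C ∩ GammaSet π 2 ∩ GammaSet π' 2).ncard

/-- The code `C` has minimum distance `δ`. -/
def HasMinDist [Fintype M] [DecidableEq Q] (C : Set (M → Q)) (δ : ℕ) : Prop :=
  IsLeast {d : ℕ | ∃ a ∈ C, ∃ b ∈ C, a ≠ b ∧ hammingDist a b = d} δ

/-- `IsCodeDist C β k` says that `d(β, C) = k`. -/
def IsCodeDist [Fintype M] [DecidableEq Q] (C : Set (M → Q)) (β : M → Q) (k : ℕ) : Prop :=
  IsLeast {d : ℕ | ∃ γ ∈ C, hammingDist β γ = d} k

/-- `update2 α i j a b` is the vertex `γ(α|i,j|a,b)`. -/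
def update2 [DecidableEq M] (α : M → Q) (i j : M) (a b : Q) : M → Q :=
  Function.update (Function.update α i a) j b

/-- `update3 α i j k a b c` is the vertex `γ(α|i,j,k|a,b,c)`. -/
def update3 [DecidableEq M] (α : M → Q) (i j k : M) (a b c : Q) : M → Q :=
  Function.update (Function.update (Function.update α i a) j b) k c
/-! Put `D = C^x`. Since `x` preserves distance, `D` again has minimum distance at least 3, and
since `x` fixes `C₁` we get `Γ₁(α) ⊆ C₁ = D₁`. As `α ∉ D`, changing the entry of `α` at `u` to
`a ≠ α u` gives a neighbour of `α` adjacent to a codeword of `D`, which must lie in `Γ₂(α)` and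
take the value `a` at `u`; two such codewords agreeing at `u` would be at distance at most 2.
So for each coordinate `u` the codewords in `D ∩ Γ₂(α)` differing from `α` at `u` correspond to
the `q - 1` values `a ≠ α u`. If `π` differs from `α` exactly at `i` and `j`, the associates at
distance 3 from `π` are the ones other than `π` differing from `α` at `i` or at `j` (disjoint
supports would give distance 4), and `π` is the only one differing at both, which leaves
`2 (q - 1) - 1 - 1` of them. -/

open Finset

section HammingSupports

variable [Fintype M] [DecidableEq Q]

theorem hammingDist_eq_card_diffSet (a b : M → Q) : hammingDist a b = #(diffSet a b) := rfl

theorem mem_diffSet {a b : M → Q} {i : M} : i ∈ diffSet a b ↔ a i ≠ b i := by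
  simp [diffSet]

variable [DecidableEq M]

theorem diffSet_subset_union (a b c : M → Q) : diffSet a b ⊆ diffSet c a ∪ diffSet c b := by
  intro i hi
  by_contra h
  simp only [mem_union, mem_diffSet, not_or, not_not] at hi h
  exact hi (h.1.symm.trans h.2)

theorem hammingDist_add_card_inter_le (a b c : M → Q) :
    hammingDist a b + #(diffSet c a ∩ diffSet c b) ≤ hammingDist c a + hammingDist c b := by
  rw [hammingDist_eq_card_diffSet c a, hammingDist_eq_card_diffSet c b,
    ← card_union_add_card_inter]
  exact Nat.add_le_add_right (card_le_card (diffSet_subset_union a b c)) _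

theorem hammingDist_add_card_inter_lt {a b c : M → Q} {u : M} (hu : u ∈ diffSet c a)
    (hab : a u = b u) :
    hammingDist a b + #(diffSet c a ∩ diffSet c b) < hammingDist c a + hammingDist c b := by
  rw [hammingDist_eq_card_diffSet c a, hammingDist_eq_card_diffSet c b,
    ← card_union_add_card_inter]
  refine Nat.add_lt_add_right (card_lt_card ?_) _
  refine (ssubset_iff_of_subset (diffSet_subset_union a b c)).mpr ?_
  exact ⟨u, mem_union_left _ hu, fun h => mem_diffSet.mp h hab⟩

theorem add_le_hammingDist_of_disjoint {a b c : M → Q}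
    (h : Disjoint (diffSet c a) (diffSet c b)) :
    hammingDist c a + hammingDist c b ≤ hammingDist a b := by
  rw [hammingDist_eq_card_diffSet, hammingDist_eq_card_diffSet, ← card_union_of_disjoint h]
  refine card_le_card fun i hi => ?_
  rcases mem_union.mp hi with hia | hib
  · have hb : c i = b i := by_contra fun hne => disjoint_left.mp h hia (mem_diffSet.mpr hne)
    exact mem_diffSet.mpr fun hab => mem_diffSet.mp hia (hb.trans hab.symm)
  · have ha : c i = a i := by_contra fun hne => disjoint_left.mp h (mem_diffSet.mpr hne) hib
    exact mem_diffSet.mpr fun hab => mem_diffSet.mp hib (ha.trans hab)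

end HammingSupports

section Codes

variable [Fintype M] [DecidableEq Q] {C : Set (M → Q)}

theorem HasMinDist.pairwise {δ : ℕ} (h : HasMinDist C δ) :
    C.Pairwise fun a b => δ ≤ hammingDist a b :=
  fun a ha b hb hab => h.2 ⟨a, ha, b, hb, hab, rfl⟩

theorem gammaSet_one_subset_neighbourSet {α : M → Q}
    (hC : C.Pairwise fun a b => 2 ≤ hammingDist a b) (hα : α ∈ C) :
    GammaSet α 1 ⊆ neighbourSet C := by
  intro ν hν
  have hνα : hammingDist ν α = 1 := by rw [hammingDist_comm]; exact hν
  refine ⟨fun hνC => ?_, α, hα, hνα⟩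
  have := hC hνC hα (by rintro rfl; simp at hνα)
  omega

theorem IsAut.image_neighbourSet_subset {x : (M → Q) ≃ (M → Q)} (hx : IsAut x) :
    x '' neighbourSet C ⊆ neighbourSet (x '' C) := by
  rintro _ ⟨ν, ⟨hν, c, hc, hνc⟩, rfl⟩
  exact ⟨fun h => hν (x.injective.mem_set_image.mp h), x c, Set.mem_image_of_mem x hc,
    (hx ν c).trans hνc⟩

theorem IsAut.pairwise_image {x : (M → Q) ≃ (M → Q)} (hx : IsAut x) {k : ℕ}
    (hC : C.Pairwise fun a b => k ≤ hammingDist a b) :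
    (x '' C).Pairwise fun a b => k ≤ hammingDist a b := by
  rw [x.injective.injOn.pairwise_image]
  exact fun a ha b hb hab => (hC ha hb hab).trans (hx a b).ge

end Codes

section TwoShell

variable [Fintype M] [DecidableEq Q]

def twoShellAt (D : Set (M → Q)) (α : M → Q) (u : M) : Set (M → Q) :=
  {σ ∈ D ∩ GammaSet α 2 | u ∈ diffSet α σ}

variable [DecidableEq M] {D : Set (M → Q)} {α : M → Q}

theorem exists_mem_twoShellAt_apply_eq (hαD : α ∉ D) (hcover : GammaSet α 1 ⊆ neighbourSet D)
    {u : M} {a : Q} (ha : a ≠ α u) : ∃ σ ∈ twoShellAt D α u, σ u = a := by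
  have hfar : ∀ σ ∈ D, 2 ≤ hammingDist α σ := by
    intro σ hσ
    by_contra! hlt
    interval_cases h : hammingDist α σ
    · exact hαD (hammingDist_eq_zero.mp h ▸ hσ)
    · exact (hcover h).1 hσ
  set ν := Function.update α u a
  have hν : hammingDist α ν = 1 := by
    rw [hammingDist_eq_card_diffSet, card_eq_one]
    refine ⟨u, ext fun k => ?_⟩
    rcases eq_or_ne k u with rfl | hk
    · simp [mem_diffSet, ν, ha.symm]
    · simp [mem_diffSet, ν, hk]
  obtain ⟨-, σ, hσD, hνσ⟩ := hcover hν
  have hσu : σ u = a := by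
    by_contra hne
    have : hammingDist α σ ≤ hammingDist ν σ := by
      refine card_le_card fun k hk => mem_diffSet.mpr ?_
      rcases eq_or_ne k u with rfl | hku
      · simpa [ν] using Ne.symm hne
      · simpa [ν, hku] using mem_diffSet.mp hk
    have := hfar σ hσD
    omega
  have h2 : hammingDist α σ = 2 := by
    have := hammingDist_triangle α ν σ
    have := hfar σ hσD
    omega
  exact ⟨σ, ⟨⟨hσD, h2⟩, mem_diffSet.mpr (hσu ▸ ha.symm)⟩, hσu⟩

theorem eq_of_mem_twoShellAt_of_apply_eq (hD : D.Pairwise fun a b => 3 ≤ hammingDist a b)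
    {u : M} {σ τ : M → Q} (hσ : σ ∈ twoShellAt D α u) (hτ : τ ∈ twoShellAt D α u)
    (h : σ u = τ u) : σ = τ := by
  by_contra hne
  have hσ2 : hammingDist α σ = 2 := hσ.1.2
  have hτ2 : hammingDist α τ = 2 := hτ.1.2
  have := hammingDist_add_card_inter_lt hσ.2 h
  have := card_pos.mpr ⟨u, mem_inter.mpr ⟨hσ.2, hτ.2⟩⟩
  have := hD hσ.1.1 hτ.1.1 hne
  omega

theorem ncard_twoShellAt [Fintype Q] (hD : D.Pairwise fun a b => 3 ≤ hammingDist a b)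
    (hαD : α ∉ D) (hcover : GammaSet α 1 ⊆ neighbourSet D) (u : M) :
    (twoShellAt D α u).ncard = Fintype.card Q - 1 := by
  have hbij : Set.BijOn (· u) (twoShellAt D α u) {α u}ᶜ := by
    refine ⟨fun σ hσ => Ne.symm (mem_diffSet.mp hσ.2),
      fun σ hσ τ hτ h => eq_of_mem_twoShellAt_of_apply_eq hD hσ hτ h, fun a ha => ?_⟩
    obtain ⟨σ, hσ, rfl⟩ := exists_mem_twoShellAt_apply_eq hαD hcover ha
    exact ⟨σ, hσ, rfl⟩
  rw [hbij.ncard_eq, Set.ncard_compl, Set.ncard_singleton, Nat.card_eq_fintype_card]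

theorem twoShellAt_inter_twoShellAt (hD : D.Pairwise fun a b => 3 ≤ hammingDist a b)
    {π : M → Q} (hπ : π ∈ D ∩ GammaSet α 2) {i j : M} (hπij : diffSet α π = {i, j}) :
    twoShellAt D α i ∩ twoShellAt D α j = {π} := by
  ext σ
  constructor
  · rintro ⟨hσi, hσj⟩
    by_contra hne
    have hsub : {i, j} ⊆ diffSet α π ∩ diffSet α σ := by
      rw [hπij, insert_subset_iff, singleton_subset_iff]
      simp [hσi.2, hσj.2]
    have := hammingDist_add_card_inter_le π σ α
    have := card_le_card hsub
    have : #({i, j} : Finset M) = 2 := hπij ▸ hπ.2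
    have := hD hπ.1 hσi.1.1 (Ne.symm hne)
    have hπ2 : hammingDist α π = 2 := hπ.2
    have hσ2 : hammingDist α σ = 2 := hσi.1.2
    omega
  · rintro rfl
    exact ⟨⟨hπ, by simp [hπij]⟩, ⟨hπ, by simp [hπij]⟩⟩

theorem setOf_hammingDist_eq_three_eq (hD : D.Pairwise fun a b => 3 ≤ hammingDist a b)
    {π : M → Q} (hπ : π ∈ D ∩ GammaSet α 2) {i j : M} (hπij : diffSet α π = {i, j}) :
    {π' ∈ D ∩ GammaSet α 2 | hammingDist π π' = 3} =
      (twoShellAt D α i ∪ twoShellAt D α j) \ {π} := by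
  have hπ2 : hammingDist α π = 2 := hπ.2
  ext σ
  constructor
  · rintro ⟨hσ, h3⟩
    refine ⟨?_, fun hσπ => by simp [Set.mem_singleton_iff.mp hσπ] at h3⟩
    by_contra hout
    have hdisj : Disjoint (diffSet α π) (diffSet α σ) := by
      simp only [Set.mem_union, twoShellAt, Set.mem_ofPred_eq, hσ, true_and, not_or] at hout
      simp [hπij, hout.1, hout.2]
    have := add_le_hammingDist_of_disjoint hdisj
    have hσ2 : hammingDist α σ = 2 := hσ.2
    omega
  · rintro ⟨hσ, hσπ⟩
    obtain ⟨u, hπu, hσu⟩ : ∃ u ∈ diffSet α π, σ ∈ twoShellAt D α u := by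
      rcases hσ with hσ | hσ
      · exact ⟨i, by simp [hπij], hσ⟩
      · exact ⟨j, by simp [hπij], hσ⟩
    have := hammingDist_add_card_inter_le π σ α
    have := card_pos.mpr ⟨u, mem_inter.mpr ⟨hπu, hσu.2⟩⟩
    have := hD hπ.1 hσu.1.1 (Ne.symm hσπ)
    have hσ2 : hammingDist α σ = 2 := hσu.1.2
    exact ⟨hσu.1, by omega⟩

theorem ncard_setOf_hammingDist_eq_three [Fintype Q]
    (hD : D.Pairwise fun a b => 3 ≤ hammingDist a b) (hcover : GammaSet α 1 ⊆ neighbourSet D)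
    {π : M → Q} (hπ : π ∈ D ∩ GammaSet α 2) :
    {π' ∈ D ∩ GammaSet α 2 | hammingDist π π' = 3}.ncard = 2 * Fintype.card Q - 4 := by
  have hπ2 : hammingDist α π = 2 := hπ.2
  have hαD : α ∉ D := fun hα => by
    have := hD hα hπ.1 (by rintro rfl; simp at hπ2)
    omega
  obtain ⟨i, j, -, hπij⟩ : ∃ i j, i ≠ j ∧ diffSet α π = {i, j} := card_eq_two.mp hπ2
  have hunion := Set.ncard_union_add_ncard_inter (twoShellAt D α i) (twoShellAt D α j)
  rw [twoShellAt_inter_twoShellAt hD hπ hπij, Set.ncard_singleton,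
    ncard_twoShellAt hD hαD hcover, ncard_twoShellAt hD hαD hcover] at hunion
  have hπi : π ∈ twoShellAt D α i := ⟨hπ, by simp [hπij]⟩
  rw [setOf_hammingDist_eq_three_eq hD hπ hπij,
    Set.ncard_sdiff_singleton_of_mem (Set.mem_union_left _ hπi)]
  omega

end TwoShell

/-- For an elusive triple with `δ ≥ 3` and an associate `π`, there are
exactly `2q - 4` associates `π'` with `d(π,π') = 3`. -/
theorem stmt_14 (m q : ℕ) (C : Set (Fin m → Fin q)) (α : Fin m → Fin q)
    (x : (Fin m → Fin q) ≃ (Fin m → Fin q))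
    (hET : IsElusiveTriple C α x) (hδ : ∃ δ : ℕ, 3 ≤ δ ∧ HasMinDist C δ)
    (π : Fin m → Fin q) (hπ : IsAssociate C α x π) :
    {π' : Fin m → Fin q | IsAssociate C α x π' ∧ hammingDist π π' = 3}.ncard
      = 2 * q - 4 := by
  obtain ⟨hx, hfix, hαC, -⟩ := hET
  obtain ⟨δ, hδ3, hδC⟩ := hδ
  have hC : C.Pairwise fun a b => 3 ≤ hammingDist a b :=
    hδC.pairwise.mono' fun _ _ h => hδ3.trans h
  have hcover : GammaSet α 1 ⊆ neighbourSet (x '' C) :=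
    (gammaSet_one_subset_neighbourSet (hC.mono' fun _ _ h => by omega) hαC).trans
      (hfix ▸ hx.image_neighbourSet_subset)
  have hcount := ncard_setOf_hammingDist_eq_three (hx.pairwise_image hC) hcover ⟨hπ.2, hπ.1⟩
  rw [Fintype.card_fin] at hcount
  convert hcount using 3
  simp only [IsAssociate, Set.mem_inter_iff, and_comm]
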